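/- For any binary-input DMC W, the Bhattacharyya parameter of the minus channel satisfies Z(W^-) ≤ 2 Z(W) − Z(W)^2, and in particular Z(W^-) ≤ 2 Z(W). -/

import Mathlib

open Finset

/-- A discrete channel: nonnegative transition "probabilities" summing to one. -/
def IsChannel {X Y : Type} [Fintype Y] (W : X → Y → ℝ) : Prop :=
  (∀ x y, 0 ≤ W x y) ∧ ∀ x, ∑ y, W x y = 1

/-- `Wd` is (stochastically) degraded with respect to `W`. -/
def Degraded {X Y Z : Type} [Fintype Y] [Fintype Z]
    (Wd : X → Z → ℝ) (W : X → Y → ℝ) : Prop :=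
  ∃ P : Y → Z → ℝ, IsChannel P ∧ ∀ x z, Wd x z = ∑ y, P y z * W x y
/-- Arıkan's minus transform. -/
noncomputable def Wminus {Y : Type} (W : Fin 2 → Y → ℝ) : Fin 2 → Y × Y → ℝ :=
  fun u1 p => ∑ u2 : Fin 2, (1 / 2 : ℝ) * W (u1 + u2) p.1 * W u2 p.2

/-- Arıkan's plus transform. -/
noncomputable def Wplus {Y : Type} (W : Fin 2 → Y → ℝ) : Fin 2 → Y × Y × Fin 2 → ℝ :=
  fun u2 p => (1 / 2 : ℝ) * W (p.2.2 + u2) p.1 * W u2 p.2.1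
/-- Bhattacharyya parameter. -/
noncomputable def Zparam {Y : Type} [Fintype Y] (W : Fin 2 → Y → ℝ) : ℝ :=
  ∑ y, Real.sqrt (W 0 y * W 1 y)

/-- Symmetric capacity (mutual information with uniform input), in bits. -/
noncomputable def Icap {Y : Type} [Fintype Y] (W : Fin 2 → Y → ℝ) : ℝ :=
  ∑ y, ∑ x : Fin 2, (1 / 2 : ℝ) * W x y *
    Real.logb 2 (W x y / ((1 / 2) * W 0 y + (1 / 2) * W 1 y))

/-!
Write `a = √(W 0 y W 1 y)` and `s = W 0 y + W 1 y`. For each output pair `(y₁, y₂)`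
the summand of `Z(W⁻)` is bounded by `(a₁ s₂ + a₂ s₁)/2 − a₁ a₂`: after squaring this is
AM–GM (`2a ≤ s`) in both coordinates. Summing over `Y × Y` with `∑ a = Z(W)` and
`∑ s = 2` gives `Z(W⁻) ≤ 2 Z(W) − Z(W)²`.
-/

lemma two_mul_sqrt_mul_le_add {a b : ℝ} (ha : 0 ≤ a) (hb : 0 ≤ b) :
    2 * √(a * b) ≤ a + b := by
  rw [Real.sqrt_mul ha]
  nlinarith [sq_nonneg (√a - √b), Real.sq_sqrt ha, Real.sq_sqrt hb]

lemma sqrt_mul_half_add_le {a b c d : ℝ} (ha : 0 ≤ a) (hb : 0 ≤ b) (hc : 0 ≤ c) (hd : 0 ≤ d) :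
    √((a * c + b * d) / 2 * ((b * c + a * d) / 2)) ≤
      (√(a * b) * (c + d) + √(c * d) * (a + b)) / 2 - √(a * b) * √(c * d) := by
  set p := √(a * b)
  set q := √(c * d)
  have hp : 0 ≤ p := Real.sqrt_nonneg _
  have hq : 0 ≤ q := Real.sqrt_nonneg _
  have hp2 : p ^ 2 = a * b := Real.sq_sqrt (mul_nonneg ha hb)
  have hq2 : q ^ 2 = c * d := Real.sq_sqrt (mul_nonneg hc hd)
  have hab : 2 * p ≤ a + b := two_mul_sqrt_mul_le_add ha hb
  have hcd : 2 * q ≤ c + d := two_mul_sqrt_mul_le_add hc hd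
  have hgap : ((p * (c + d) + q * (a + b)) / 2 - p * q) ^ 2
      - (a * c + b * d) / 2 * ((b * c + a * d) / 2)
      = p * q * (a + b - 2 * p) * (c + d - 2 * q) / 2 := by
    linear_combination ((c ^ 2 + d ^ 2) / 4 - q ^ 2 / 2) * hp2
      + ((a ^ 2 + b ^ 2) / 4 - p ^ 2 / 2) * hq2
  rw [Real.sqrt_le_iff]
  constructor
  · nlinarith [mul_nonneg hp (sub_nonneg.2 hcd), mul_nonneg hq (add_nonneg ha hb)]
  · nlinarith [mul_nonneg (mul_nonneg hp hq) (mul_nonneg (sub_nonneg.2 hab) (sub_nonneg.2 hcd))]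

lemma Wminus_zero_apply {Y : Type} (W : Fin 2 → Y → ℝ) (y₁ y₂ : Y) :
    Wminus W 0 (y₁, y₂) = (W 0 y₁ * W 0 y₂ + W 1 y₁ * W 1 y₂) / 2 := by
  simp only [Wminus, Fin.sum_univ_two, zero_add]
  ring

lemma Wminus_one_apply {Y : Type} (W : Fin 2 → Y → ℝ) (y₁ y₂ : Y) :
    Wminus W 1 (y₁, y₂) = (W 1 y₁ * W 0 y₂ + W 0 y₁ * W 1 y₂) / 2 := by
  simp only [Wminus, Fin.sum_univ_two, add_zero, show (1 + 1 : Fin 2) = 0 from rfl]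
  ring

lemma Zparam_Wminus_le_sum {Y : Type} [Fintype Y] {W : Fin 2 → Y → ℝ}
    (hW : ∀ x y, 0 ≤ W x y) :
    Zparam (Wminus W) ≤ ∑ p : Y × Y,
      ((√(W 0 p.1 * W 1 p.1) * (W 0 p.2 + W 1 p.2)
        + √(W 0 p.2 * W 1 p.2) * (W 0 p.1 + W 1 p.1)) / 2
        - √(W 0 p.1 * W 1 p.1) * √(W 0 p.2 * W 1 p.2)) :=
  sum_le_sum fun ⟨y₁, y₂⟩ _ => by
    rw [Wminus_zero_apply, Wminus_one_apply]
    exact sqrt_mul_half_add_le (hW 0 y₁) (hW 1 y₁) (hW 0 y₂) (hW 1 y₂)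

lemma sum_prod_half_add_sub_mul {Y : Type} [Fintype Y] (f g : Y → ℝ) :
    ∑ p : Y × Y, ((f p.1 * g p.2 + f p.2 * g p.1) / 2 - f p.1 * f p.2)
      = (∑ y, f y) * (∑ y, g y) - (∑ y, f y) ^ 2 := by
  have hfg : ∑ p : Y × Y, f p.1 * g p.2 = (∑ y, f y) * ∑ y, g y := by
    rw [Fintype.sum_prod_type, Fintype.sum_mul_sum]
  have hgf : ∑ p : Y × Y, f p.2 * g p.1 = (∑ y, f y) * ∑ y, g y := by
    rw [Fintype.sum_prod_type, Finset.sum_comm, Fintype.sum_mul_sum]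
  have hff : ∑ p : Y × Y, f p.1 * f p.2 = (∑ y, f y) ^ 2 := by
    rw [Fintype.sum_prod_type, sq, Fintype.sum_mul_sum]
  rw [sum_sub_distrib, ← sum_div, sum_add_distrib, hfg, hgf, hff]
  ring

/-- `Z(W⁻) ≤ 2 Z(W) − Z(W)²`, and in particular `Z(W⁻) ≤ 2 Z(W)`. -/
theorem bhattacharyya_minus {Y : Type} [Fintype Y]
    (W : Fin 2 → Y → ℝ) (hW : IsChannel W) :
    Zparam (Wminus W) ≤ 2 * Zparam W - (Zparam W) ^ 2 ∧
      Zparam (Wminus W) ≤ 2 * Zparam W := by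
  obtain ⟨hnonneg, hsum⟩ := hW
  have hmass : ∑ y, (W 0 y + W 1 y) = 2 := by
    rw [sum_add_distrib, hsum, hsum]
    norm_num
  have hZ : Zparam (Wminus W) ≤ 2 * Zparam W - Zparam W ^ 2 := by
    have h := Zparam_Wminus_le_sum hnonneg
    rwa [sum_prod_half_add_sub_mul (fun y => √(W 0 y * W 1 y)) (fun y => W 0 y + W 1 y),
      hmass, mul_comm] at h
  exact ⟨hZ, hZ.trans (sub_le_self _ (sq_nonneg _))⟩
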